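/- The relations [L_m, L_n] = (m-n)L_{m+n}, [L_m, J_n] = -n J_{m+n}, [L_m, P^i_n] = (m-n)P^i_{m+n}, [J_m, P^i_n] = Σ_j ε_{ij}P^j_{m+n}, [P^i_m, P^j_n] = ε_{ij}Θ_{m+n}, [L_m, Θ_n] = (2m-n)Θ_{m+n}, with all other brackets zero (in particular [J_m, Θ_n] = [Θ_m, Θ_n] = [J_m, J_n] = 0), satisfy the Jacobi identity and hence define a Lie algebra 𝔤̌ on the span of L_m, J_m, P^1_m, P^2_m, Θ_m (m ∈ ℤ). -/

import Mathlib

/-- Basis of the novel algebra `𝔤̌`: `L m`, `J m`, `P i m`, `Θ m` for `m ∈ ℤ`. -/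
inductive GCAGen5 : Type
  | L : ℤ → GCAGen5
  | J : ℤ → GCAGen5
  | P : Fin 2 → ℤ → GCAGen5
  | Th : ℤ → GCAGen5
  deriving DecidableEq

/-- `ε_{12} = -ε_{21} = 1`, `ε_{11} = ε_{22} = 0`. -/
def eps : Fin 2 → Fin 2 → ℤ := fun i j =>
  if i = 0 ∧ j = 1 then 1 else if i = 1 ∧ j = 0 then -1 else 0

open Finsupp

/-- Structure constants of `𝔤̌` on basis elements:
`[L_m,L_n] = (m-n)L_{m+n}`, `[L_m,J_n] = -n J_{m+n}`,
`[L_m,P^i_n] = (m-n)P^i_{m+n}`, `[J_m,P^i_n] = Σ_j ε_{ij} P^j_{m+n}`,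
`[P^i_m,P^j_n] = ε_{ij} Θ_{m+n}`, `[L_m,Θ_n] = (2m-n)Θ_{m+n}`,
all other brackets zero. -/
noncomputable def brCheck : GCAGen5 → GCAGen5 → (GCAGen5 →₀ ℂ)
  | .L m, .L n => single (.L (m + n)) ((m - n : ℤ) : ℂ)
  | .L m, .J n => single (.J (m + n)) ((-n : ℤ) : ℂ)
  | .J m, .L n => single (.J (m + n)) ((m : ℤ) : ℂ)
  | .L m, .P i n => single (.P i (m + n)) ((m - n : ℤ) : ℂ)
  | .P i n, .L m => single (.P i (m + n)) ((n - m : ℤ) : ℂ)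
  | .J m, .P i n => ∑ j : Fin 2, single (.P j (m + n)) ((eps i j : ℤ) : ℂ)
  | .P i n, .J m => ∑ j : Fin 2, single (.P j (m + n)) ((-eps i j : ℤ) : ℂ)
  | .P i m, .P j n => single (.Th (m + n)) ((eps i j : ℤ) : ℂ)
  | .L m, .Th n => single (.Th (m + n)) ((2 * m - n : ℤ) : ℂ)
  | .Th n, .L m => single (.Th (m + n)) ((n - 2 * m : ℤ) : ℂ)
  | _, _ => 0

/-- The bracket extended bilinearly to the span of the basis. -/
noncomputable def BrCheck (x y : GCAGen5 →₀ ℂ) : GCAGen5 →₀ ℂ :=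
  x.sum fun i a => y.sum fun j b => (a * b) • brCheck i j

/-! The bracket is the bilinear extension of the structure constants, so both identities reduce
to basis vectors. Alternation does because the constants are alternating and the symmetrised
bracket `B + B.flip` is bilinear. The Jacobiator is linear in its first slot and cyclically
symmetric, hence trilinear, so it suffices to check it on triples of basis vectors; there every
bracket shifts the mode numbers additively and the identity is a finite case check. -/

section BilinearExtension

variable {ι R M : Type*} [CommSemiring R] [AddCommMonoid M] [Module R M]

noncomputable def bilinearExtension (c : ι → ι → M) : (ι →₀ R) →ₗ[R] (ι →₀ R) →ₗ[R] M :=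
  Finsupp.linearCombination R fun i => Finsupp.linearCombination R (c i)

theorem bilinearExtension_apply (c : ι → ι → M) (x y : ι →₀ R) :
    bilinearExtension c x y = x.sum fun i a => y.sum fun j b => (a * b) • c i j := by
  simp only [bilinearExtension, Finsupp.linearCombination_apply, LinearMap.finsupp_sum_apply,
    LinearMap.smul_apply, Finsupp.smul_sum, smul_smul]

theorem bilinearExtension_single_one (c : ι → ι → M) (i : ι) :
    bilinearExtension (R := R) c (single i 1) = Finsupp.linearCombination R (c i) := by
  rw [bilinearExtension, Finsupp.linearCombination_single, one_smul]

end BilinearExtension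

theorem isAlt_bilinearExtension {ι R M : Type*} [CommRing R] [AddCommGroup M] [Module R M]
    {c : ι → ι → M} (hdiag : ∀ i, c i i = 0)
    (hswap : ∀ i j, c j i = -c i j) : (bilinearExtension (R := R) c).IsAlt := by
  set B := bilinearExtension (R := R) c
  have hflip : B.flip = -B := by
    ext i j
    simp [B, bilinearExtension_single_one, hswap i j]
  intro x
  induction x using Finsupp.induction_linear with
  | zero => simp
  | add x y hx hy =>
    have hyx : B y x = -B x y := by
      rw [← B.flip_apply, hflip, LinearMap.neg_apply, LinearMap.neg_apply]
    simp only [map_add, LinearMap.add_apply, hx, hy, hyx]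
    abel
  | single i a => simp [B, bilinearExtension, hdiag]

section Jacobiator

variable {ι R M : Type*} [CommSemiring R] [AddCommMonoid M] [Module R M]

def jacobiator (B : M →ₗ[R] M →ₗ[R] M) (x y z : M) : M :=
  B x (B y z) + B y (B z x) + B z (B x y)

theorem jacobiator_cycle (B : M →ₗ[R] M →ₗ[R] M) (x y z : M) :
    jacobiator B x y z = jacobiator B y z x := by
  simp only [jacobiator]
  abel

theorem jacobiator_eq_linearMap_apply (B : M →ₗ[R] M →ₗ[R] M) (x y z : M) :
    jacobiator B x y z = (B.flip (B y z) + B y ∘ₗ B z + B z ∘ₗ B.flip y) x :=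
  rfl

theorem jacobiator_eq_zero_of_single_left
    {B : (ι →₀ R) →ₗ[R] (ι →₀ R) →ₗ[R] (ι →₀ R)} {y z : ι →₀ R}
    (h : ∀ i, jacobiator B (single i 1) y z = 0) (x : ι →₀ R) : jacobiator B x y z = 0 := by
  have hlin : B.flip (B y z) + B y ∘ₗ B z + B z ∘ₗ B.flip y = 0 :=
    Finsupp.lhom_ext' fun i => LinearMap.ext_ring (h i)
  rw [jacobiator_eq_linearMap_apply, hlin, LinearMap.zero_apply]

theorem jacobiator_eq_zero_of_single {B : (ι →₀ R) →ₗ[R] (ι →₀ R) →ₗ[R] (ι →₀ R)}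
    (h : ∀ i j k, jacobiator B (single i 1) (single j 1) (single k 1) = 0) (x y z : ι →₀ R) :
    jacobiator B x y z = 0 := by
  refine jacobiator_eq_zero_of_single_left (fun i => ?_) x
  rw [jacobiator_cycle]
  refine jacobiator_eq_zero_of_single_left (fun j => ?_) _
  rw [jacobiator_cycle]
  refine jacobiator_eq_zero_of_single_left (fun k => ?_) _
  rw [jacobiator_cycle]
  exact h i j k

end Jacobiator

theorem BrCheck_eq_bilinearExtension (x y : GCAGen5 →₀ ℂ) :
    BrCheck x y = bilinearExtension brCheck x y :=
  (bilinearExtension_apply brCheck x y).symm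

theorem brCheck_self (i : GCAGen5) : brCheck i i = 0 := by
  rcases i with m | m | ⟨a, m⟩ | m <;> (try fin_cases a) <;> simp [brCheck, eps]

theorem brCheck_swap (i j : GCAGen5) : brCheck j i = -brCheck i j := by
  rcases i with m | m | ⟨a, m⟩ | m <;> rcases j with n | n | ⟨b, n⟩ | n <;>
    (try fin_cases a) <;> (try fin_cases b) <;>
    simp [brCheck, eps, Fin.sum_univ_two, ← Finsupp.single_neg, add_comm]

theorem jacobiator_brCheck_single (i j k : GCAGen5) :
    jacobiator (bilinearExtension brCheck) (single i (1 : ℂ)) (single j 1) (single k 1) = 0 := by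
  simp only [jacobiator, bilinearExtension_single_one, Finsupp.linearCombination_single, one_smul]
  -- after expanding, gather the coefficients of each basis vector into one `single`:
  -- what is left are polynomial identities in the indices
  rcases i with m | m | ⟨a, m⟩ | m <;> rcases j with n | n | ⟨b, n⟩ | n <;>
    rcases k with p | p | ⟨c, p⟩ | p <;>
    (try fin_cases a) <;> (try fin_cases b) <;> (try fin_cases c) <;>
    simp [brCheck, eps, Fin.sum_univ_two, Finsupp.smul_single,
      smul_eq_mul, smul_add, map_add, -Finsupp.single_mul, sub_eq_add_neg,
      ← Finsupp.single_neg] <;>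
    ring_nf <;>
    simp only [← Finsupp.single_add, Finsupp.single_eq_zero] <;>
    ring

/-- The given structure constants satisfy alternativity and the Jacobi identity,
hence define a Lie algebra `𝔤̌` on the span of `L_m, J_m, P^1_m, P^2_m, Θ_m`. -/
theorem stmt14 :
    (∀ x : GCAGen5 →₀ ℂ, BrCheck x x = 0) ∧
    (∀ x y : GCAGen5 →₀ ℂ, BrCheck x y = - BrCheck y x) ∧
    (∀ x y z : GCAGen5 →₀ ℂ,
      BrCheck x (BrCheck y z) + BrCheck y (BrCheck z x) + BrCheck z (BrCheck x y) = 0) := by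
  have hAlt := isAlt_bilinearExtension (R := ℂ) brCheck_self brCheck_swap
  simp only [BrCheck_eq_bilinearExtension]
  exact ⟨hAlt, fun x y => (hAlt.neg y x).symm,
    jacobiator_eq_zero_of_single jacobiator_brCheck_single⟩
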